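/- Let J : T → U⊗U be a function such that each J(λ) is invertible and of zero weight, and embed J into H⊗H as Ĵ = Σ_{λ∈T} E_{λλ}J⁽¹⁾(λ)⊗E_{λλ}J⁽²⁾(λ) (and similarly Ĵ⁻¹ for λ ↦ J(λ)⁻¹). Then the following identities hold in H⊗H⊗H: (i) (Δ_H⊗id)(Θ)·(Ĵ⊗1) = (Ĵ⁺⊗1)·(Δ_H⊗id)(Θ), where Ĵ⁺ denotes the embedding of λ ↦ J(λ+μ) weighted by P_μ in the third factor, i.e. Ĵ⁺⊗1 = Σ_{λ,μ} E_{λλ}J⁽¹⁾(λ+μ)⊗E_{λλ}J⁽²⁾(λ+μ)⊗(1⊗P_μ); (ii) (id⊗Δ_H)(Θ)·(1⊗Ĵ) = (1⊗Ĵ)·(id⊗Δ_H)(Θ); (iii) (Ĵ⁻¹⊗1)·(Δ_H⊗id)(Θ̄) = (Δ_H⊗id)(Θ̄)·(Ĵ⁻¹⁺⊗1), where Ĵ⁻¹⁺⊗1 = Σ_{λ,μ} E_{λλ}(J(λ+μ)⁻¹)⁽¹⁾⊗E_{λλ}(J(λ+μ)⁻¹)⁽²⁾⊗(1⊗P_μ);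 (iv) (1⊗Ĵ⁻¹)·(id⊗Δ_H)(Θ̄) = (id⊗Δ_H)(Θ̄)·(1⊗Ĵ⁻¹). -/

import Mathlib

open TensorProduct

noncomputable section

namespace WHA

variable (k B : Type*) [Field k] [Ring B] [Algebra k B]

/-- `x ↦ x ⊗ 1`, the embedding of `B ⊗ B` into legs 1,2 of `B ⊗ B ⊗ B`. -/
def leg12 : B ⊗[k] B →ₗ[k] B ⊗[k] (B ⊗[k] B) :=
  (TensorProduct.assoc k B B B).toLinearMap ∘ₗ (TensorProduct.mk k (B ⊗[k] B) B).flip 1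

/-- `x ↦ 1 ⊗ x`, the embedding of `B ⊗ B` into legs 2,3 of `B ⊗ B ⊗ B`. -/
def leg23 : B ⊗[k] B →ₗ[k] B ⊗[k] (B ⊗[k] B) :=
  TensorProduct.mk k B (B ⊗[k] B) 1

/-- `a ⊗ b ↦ a ⊗ 1 ⊗ b`, the embedding of `B ⊗ B` into legs 1,3 of `B ⊗ B ⊗ B`. -/
def leg13 : B ⊗[k] B →ₗ[k] B ⊗[k] (B ⊗[k] B) :=
  TensorProduct.map LinearMap.id (TensorProduct.mk k B B 1)

/-- `Δ ⊗ id`, landing in the right-associated triple tensor product. -/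
def ext12 (Δ : B →ₗ[k] B ⊗[k] B) : B ⊗[k] B →ₗ[k] B ⊗[k] (B ⊗[k] B) :=
  (TensorProduct.assoc k B B B).toLinearMap ∘ₗ TensorProduct.map Δ LinearMap.id

/-- `id ⊗ Δ`. -/
def ext23 (Δ : B →ₗ[k] B ⊗[k] B) : B ⊗[k] B →ₗ[k] B ⊗[k] (B ⊗[k] B) :=
  TensorProduct.map LinearMap.id Δ

/-- `(ε ⊗ id)` composed with the canonical isomorphism `k ⊗ B ≅ B`. -/
def epsL (ε : B →ₗ[k] k) : B ⊗[k] B →ₗ[k] B :=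
  (TensorProduct.lid k B).toLinearMap ∘ₗ TensorProduct.map ε LinearMap.id

/-- `(id ⊗ ε)` composed with the canonical isomorphism `B ⊗ k ≅ B`. -/
def epsR (ε : B →ₗ[k] k) : B ⊗[k] B →ₗ[k] B :=
  (TensorProduct.rid k B).toLinearMap ∘ₗ TensorProduct.map LinearMap.id ε

/-- Pairing of two linear functionals against an element of `B ⊗ B`. -/
def pairF (φ ψ : B →ₗ[k] k) : B ⊗[k] B →ₗ[k] k :=
  (TensorProduct.lid k k).toLinearMap ∘ₗ TensorProduct.map φ ψ

/-- The multiplication map `B ⊗ B → B`. -/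
def mul2 : B ⊗[k] B →ₗ[k] B := LinearMap.mul' k B

end WHA

namespace DQG

variable (k : Type*) [Field k]
variable (T : Type*) [AddCommGroup T] [Fintype T] [DecidableEq T]
variable (U : Type*) [Ring U] [HopfAlgebra k U]

/-- The matrix units `E_{λμ}`. -/
def E (l m : T) : Matrix T T k := Matrix.single l m 1

/-- The `(λ,μ)` matrix entry, as a linear functional. -/
def entry (l m : T) : Matrix T T k →ₗ[k] k where
  toFun A := A l m
  map_add' _ _ := rfl
  map_smul' _ _ := rfl

/-- The comultiplication of `End_k(A)`: `Δ(E_{λμ}) = E_{λμ} ⊗ E_{λμ}`. -/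
def ΔM : Matrix T T k →ₗ[k] Matrix T T k ⊗[k] Matrix T T k :=
  ∑ l : T, ∑ m : T, (entry k T l m).smulRight (E k T l m ⊗ₜ[k] E k T l m)

/-- The counit of `End_k(A)`: `ε(E_{λμ}) = 1`. -/
def εM : Matrix T T k →ₗ[k] k := ∑ l : T, ∑ m : T, entry k T l m

/-- The antipode of `End_k(A)`: `S(E_{λμ}) = E_{μλ}`. -/
def SM : Matrix T T k →ₗ[k] Matrix T T k :=
  ∑ l : T, ∑ m : T, (entry k T l m).smulRight (E k T m l)

/-- The comultiplication of the tensor product weak Hopf algebra `H = End_k(A) ⊗ U`. -/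
def ΔH : (Matrix T T k ⊗[k] U) →ₗ[k] (Matrix T T k ⊗[k] U) ⊗[k] (Matrix T T k ⊗[k] U) :=
  (TensorProduct.tensorTensorTensorComm k (Matrix T T k) (Matrix T T k) U U).toLinearMap ∘ₗ
    TensorProduct.map (ΔM k T) Coalgebra.comul

/-- The counit of `H = End_k(A) ⊗ U`. -/
def εH : (Matrix T T k ⊗[k] U) →ₗ[k] k :=
  (TensorProduct.lid k k).toLinearMap ∘ₗ TensorProduct.map (εM k T) Coalgebra.counit

/-- The antipode of `H = End_k(A) ⊗ U`. -/
def SH : (Matrix T T k ⊗[k] U) →ₗ[k] (Matrix T T k ⊗[k] U) :=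
  TensorProduct.map (SM k T) (HopfAlgebra.antipode (R := k))

set_option maxHeartbeats 1000000 in
/-- The canonical ring structure on the triple tensor power of `H = End_k(A) ⊗ U`
(made explicit to help instance resolution). -/
instance triRing : Ring ((Matrix T T k ⊗[k] U) ⊗[k] ((Matrix T T k ⊗[k] U) ⊗[k] (Matrix T T k ⊗[k] U))) := by
  exact Algebra.TensorProduct.instRing (R := k) (A := Matrix T T k ⊗[k] U)
    (B := (Matrix T T k ⊗[k] U) ⊗[k] (Matrix T T k ⊗[k] U))

variable (P : T → U)

/-- The hypotheses on the system of idempotents `{P_μ}` spanning the abelian Hopf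
subalgebra `A ⊆ U`. -/
structure IsPSystem : Prop where
  orth : ∀ m n : T, P m * P n = if m = n then P m else 0
  sum_one : ∑ m : T, P m = 1
  comul_P : ∀ m : T, Coalgebra.comul (R := k) (P m) = ∑ n : T, P n ⊗ₜ[k] P (m - n)
  counit_P : ∀ m : T, Coalgebra.counit (R := k) (P m) = if m = 0 then (1 : k) else 0
  antipode_P : ∀ m : T, HopfAlgebra.antipode (R := k) (P m) = P (-m)

/-- The element `Θ = Σ_{λμ} E_{λ,λ+μ} ⊗ E_{λλ}P_μ` of `H ⊗ H`. -/
def Θ : (Matrix T T k ⊗[k] U) ⊗[k] (Matrix T T k ⊗[k] U) :=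
  ∑ l : T, ∑ m : T, ((E k T l (l + m)) ⊗ₜ[k] (1 : U)) ⊗ₜ[k] ((E k T l l) ⊗ₜ[k] P m)

/-- The element `Θ̄ = Σ_{λμ} E_{λ+μ,λ} ⊗ E_{λλ}P_μ` of `H ⊗ H`. -/
def Θbar : (Matrix T T k ⊗[k] U) ⊗[k] (Matrix T T k ⊗[k] U) :=
  ∑ l : T, ∑ m : T, ((E k T (l + m) l) ⊗ₜ[k] (1 : U)) ⊗ₜ[k] ((E k T l l) ⊗ₜ[k] P m)

/-- `u ⊗ v ↦ (E_{λλ} ⊗ u) ⊗ (E_{λλ} ⊗ v)`. -/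
def embAt (l : T) : U ⊗[k] U →ₗ[k] (Matrix T T k ⊗[k] U) ⊗[k] (Matrix T T k ⊗[k] U) :=
  TensorProduct.map (TensorProduct.mk k (Matrix T T k) U (E k T l l))
    (TensorProduct.mk k (Matrix T T k) U (E k T l l))

/-- The embedding `J ↦ Ĵ = Σ_λ E_{λλ}J⁽¹⁾(λ) ⊗ E_{λλ}J⁽²⁾(λ)` of a
`U ⊗ U`-valued function on `T` into `H ⊗ H`. -/
def emb (J : T → U ⊗[k] U) : (Matrix T T k ⊗[k] U) ⊗[k] (Matrix T T k ⊗[k] U) := ∑ l : T, embAt k T U l (J l)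

/-- `x = a ⊗ b ↦ a ⊗ b ⊗ P_μ ∈ U ⊗ U ⊗ U`. -/
def withP (m : T) : U ⊗[k] U →ₗ[k] U ⊗[k] (U ⊗[k] U) :=
  TensorProduct.map LinearMap.id ((TensorProduct.mk k U U).flip (P m))

/-- `x ↦ P_μ ⊗ x ∈ U ⊗ U ⊗ U`. -/
def withPleft (m : T) : U ⊗[k] U →ₗ[k] U ⊗[k] (U ⊗[k] U) :=
  TensorProduct.mk k U (U ⊗[k] U) (P m)

/-- `J` is a dynamical twist for `U`, with pointwise inverse `Jbar`. -/
structure IsDynTwist (J Jbar : T → U ⊗[k] U) : Prop where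
  inv_right : ∀ l : T, J l * Jbar l = 1
  inv_left : ∀ l : T, Jbar l * J l = 1
  zero_weight : ∀ l m : T,
    J l * Coalgebra.comul (R := k) (P m) = Coalgebra.comul (R := k) (P m) * J l
  counit_left : ∀ l : T, WHA.epsL k U Coalgebra.counit (J l) = 1
  counit_right : ∀ l : T, WHA.epsR k U Coalgebra.counit (J l) = 1
  dyn : ∀ l : T,
    WHA.ext12 k U Coalgebra.comul (J l) * (∑ m : T, withP k T U P m (J (l + m)))
      = WHA.ext23 k U Coalgebra.comul (J l) * WHA.leg23 k U (J l)

end DQG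

namespace DQG

variable (k : Type*) [Field k]
variable (T : Type*) [AddCommGroup T] [Fintype T] [DecidableEq T]
variable (U : Type*) [Ring U] [HopfAlgebra k U]
variable (P : T → U)

/-- `u ⊗ v ↦ (E_{λλ} ⊗ u) ⊗ ((E_{λλ} ⊗ v) ⊗ (1 ⊗ P_μ))` in `H ⊗ H ⊗ H`. -/
def embShiftAt (l m : T) : U ⊗[k] U →ₗ[k] (Matrix T T k ⊗[k] U) ⊗[k] ((Matrix T T k ⊗[k] U) ⊗[k] (Matrix T T k ⊗[k] U)) :=
  TensorProduct.map (TensorProduct.mk k (Matrix T T k) U (E k T l l))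
    (((TensorProduct.mk k (Matrix T T k ⊗[k] U) (Matrix T T k ⊗[k] U)).flip ((1 : Matrix T T k) ⊗ₜ[k] P m)) ∘ₗ
      (TensorProduct.mk k (Matrix T T k) U (E k T l l)))

end DQG

/-!
Every term of the four identities is a sum of elementary tensors of `H ⊗ H ⊗ H` whose `End_k(A)`
legs are matrix units and whose `U ⊗ U` part sits in legs 1, 2 or in legs 2, 3; such tensors
multiply leg by leg. Expanding both sides, `E_{ab} E_{cd} = δ_{bc} E_{ad}` and `P_μ P_ν = δ_{μν} P_μ`
collapse them to the same double sum: literally for (i) and (iii), and for (ii) and (iv) up to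
exchanging `Δ(P_μ) J(λ)` with `J(λ) Δ(P_μ)`, which is the zero-weight condition. Zero weight passes
from `J(λ)` to its inverse, which gives (iv).
-/

namespace DQG

variable {k : Type*} [Field k] {T : Type*} {U : Type*} [Ring U] [HopfAlgebra k U]

variable (k T U) in
def placeLegs12 (a b c : Matrix T T k) (w : U) :
    U ⊗[k] U →ₗ[k] (Matrix T T k ⊗[k] U) ⊗[k] ((Matrix T T k ⊗[k] U) ⊗[k] (Matrix T T k ⊗[k] U)) :=
  map (mk k _ U a) ((mk k (Matrix T T k ⊗[k] U) _).flip (c ⊗ₜ w) ∘ₗ mk k _ U b)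

variable (k T U) in
def placeLegs23 (a : Matrix T T k) (w : U) (b c : Matrix T T k) :
    U ⊗[k] U →ₗ[k] (Matrix T T k ⊗[k] U) ⊗[k] ((Matrix T T k ⊗[k] U) ⊗[k] (Matrix T T k ⊗[k] U)) :=
  mk k (Matrix T T k ⊗[k] U) _ (a ⊗ₜ w) ∘ₗ map (mk k _ U b) (mk k _ U c)

lemma placeLegs12_ite (p : Prop) [Decidable p] (a b c : Matrix T T k) (w : U) (x : U ⊗[k] U) :
    placeLegs12 k T U (if p then a else 0) (if p then b else 0) c w x
      = if p then placeLegs12 k T U a b c w x else 0 := by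
  split_ifs <;> simp [placeLegs12]

lemma placeLegs12_ite_right (p : Prop) [Decidable p] (a b c : Matrix T T k) (w : U)
    (x : U ⊗[k] U) :
    placeLegs12 k T U a b c (if p then w else 0) x = if p then placeLegs12 k T U a b c w x else 0 := by
  split_ifs <;> simp [placeLegs12]

lemma placeLegs23_ite (p : Prop) [Decidable p] (a b c : Matrix T T k) (w : U) (x : U ⊗[k] U) :
    placeLegs23 k T U a w (if p then b else 0) (if p then c else 0) x
      = if p then placeLegs23 k T U a w b c x else 0 := by
  split_ifs <;> simp [placeLegs23]

variable [DecidableEq T]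

lemma embShiftAt_eq_placeLegs12 (P : T → U) (l m : T) :
    embShiftAt k T U P l m = placeLegs12 k T U (E k T l l) (E k T l l) 1 (P m) := rfl

variable [Fintype T]

-- `Algebra.TensorProduct.tmul_mul_tmul`, restated so that `simp` matches the product of `H ⊗ (H ⊗ H)`.
lemma tmul_mul_tmul_triple (x x' : Matrix T T k ⊗[k] U)
    (y y' : (Matrix T T k ⊗[k] U) ⊗[k] (Matrix T T k ⊗[k] U)) :
    (x ⊗ₜ[k] y) * (x' ⊗ₜ[k] y') = (x * x') ⊗ₜ[k] (y * y') :=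
  Algebra.TensorProduct.tmul_mul_tmul x x' y y'

lemma placeLegs12_mul_placeLegs12 (a a' b b' c c' : Matrix T T k) (w w' : U) (x y : U ⊗[k] U) :
    placeLegs12 k T U a b c w x * placeLegs12 k T U a' b' c' w' y
      = placeLegs12 k T U (a * a') (b * b') (c * c') (w * w') (x * y) := by
  induction x using TensorProduct.induction_on with
  | zero => simp only [map_zero, zero_mul]
  | add x₁ x₂ h₁ h₂ => simp only [map_add, add_mul, h₁, h₂]
  | tmul u v =>
    induction y using TensorProduct.induction_on with
    | zero => simp only [map_zero, mul_zero]
    | add y₁ y₂ h₁ h₂ => simp only [map_add, mul_add, h₁, h₂]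
    | tmul u' v' =>
      simp only [placeLegs12, map_tmul, LinearMap.comp_apply, mk_apply, LinearMap.flip_apply,
        tmul_mul_tmul_triple, Algebra.TensorProduct.tmul_mul_tmul]

lemma placeLegs23_mul_placeLegs23 (a a' b b' c c' : Matrix T T k) (w w' : U) (x y : U ⊗[k] U) :
    placeLegs23 k T U a w b c x * placeLegs23 k T U a' w' b' c' y
      = placeLegs23 k T U (a * a') (w * w') (b * b') (c * c') (x * y) := by
  induction x using TensorProduct.induction_on with
  | zero => simp only [map_zero, zero_mul]
  | add x₁ x₂ h₁ h₂ => simp only [map_add, add_mul, h₁, h₂]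
  | tmul u v =>
    induction y using TensorProduct.induction_on with
    | zero => simp only [map_zero, mul_zero]
    | add y₁ y₂ h₁ h₂ => simp only [map_add, mul_add, h₁, h₂]
    | tmul u' v' =>
      simp only [placeLegs23, map_tmul, LinearMap.comp_apply, mk_apply,
        tmul_mul_tmul_triple, Algebra.TensorProduct.tmul_mul_tmul]

lemma E_mul_E (a b c d : T) : E k T a b * E k T c d = if b = c then E k T a d else 0 := by
  split_ifs with h
  · simp [h, E, Matrix.single_mul_single_same]
  · simp [h, E, Matrix.single_mul_single_of_ne]

lemma ΔM_E (l m : T) : ΔM k T (E k T l m) = E k T l m ⊗ₜ E k T l m := by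
  have h : ∀ a b : T, entry k T a b (E k T l m) = if a = l ∧ b = m then 1 else 0 := fun a b => by
    change Matrix.single l m (1 : k) a b = _
    simp only [Matrix.single_apply, @eq_comm _ l a, @eq_comm _ m b]
  simp [ΔM, h, ite_smul, ite_and]

set_option synthInstance.maxHeartbeats 400000 in
lemma ΔH_E_tmul (l m : T) (u : U) :
    ΔH k T U (E k T l m ⊗ₜ u)
      = map (mk k _ U (E k T l m)) (mk k _ U (E k T l m)) (Coalgebra.comul u) := by
  simp only [ΔH, LinearMap.comp_apply, map_tmul, ΔM_E]
  induction Coalgebra.comul (R := k) u using TensorProduct.induction_on with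
  | zero => simp
  | add x₁ x₂ h₁ h₂ => simp only [tmul_add, map_add, h₁, h₂]
  | tmul a b => simp

variable (P : T → U)

-- `Θ` and `Θ̄` are the cases `(i, j) = (λ, λ + μ)` and `(λ + μ, λ)`.
variable (k T) in
def thetaSum (i j : T → T → T) : (Matrix T T k ⊗[k] U) ⊗[k] (Matrix T T k ⊗[k] U) :=
  ∑ l : T, ∑ m : T, (E k T (i l m) (j l m) ⊗ₜ[k] (1 : U)) ⊗ₜ[k] (E k T l l ⊗ₜ[k] P m)

lemma ext12_thetaSum (i j : T → T → T) :
    WHA.ext12 k _ (ΔH k T U) (thetaSum k T P i j)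
      = ∑ l : T, ∑ m : T, placeLegs12 k T U (E k T (i l m) (j l m)) (E k T (i l m) (j l m))
          (E k T l l) (P m) 1 := by
  simp only [thetaSum, map_sum]
  refine Finset.sum_congr rfl fun l _ => Finset.sum_congr rfl fun m _ => ?_
  simp [WHA.ext12, ΔH_E_tmul, Algebra.TensorProduct.one_def, placeLegs12]

lemma ext23_thetaSum (i j : T → T → T) :
    WHA.ext23 k _ (ΔH k T U) (thetaSum k T P i j)
      = ∑ l : T, ∑ m : T, placeLegs23 k T U (E k T (i l m) (j l m)) 1 (E k T l l) (E k T l l)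
          (Coalgebra.comul (P m)) := by
  simp only [thetaSum, map_sum]
  refine Finset.sum_congr rfl fun l _ => Finset.sum_congr rfl fun m _ => ?_
  simp [WHA.ext23, ΔH_E_tmul, placeLegs23]

lemma leg12_emb (J : T → U ⊗[k] U) :
    WHA.leg12 k _ (emb k T U J)
      = ∑ l : T, placeLegs12 k T U (E k T l l) (E k T l l) 1 1 (J l) := by
  simp only [emb, map_sum]
  refine Finset.sum_congr rfl fun l _ => ?_
  induction J l using TensorProduct.induction_on with
  | zero => simp only [map_zero]
  | add x₁ x₂ h₁ h₂ => simp only [map_add, h₁, h₂]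
  | tmul u v => simp [embAt, WHA.leg12, Algebra.TensorProduct.one_def, placeLegs12]

lemma leg23_emb (J : T → U ⊗[k] U) :
    WHA.leg23 k _ (emb k T U J)
      = ∑ l : T, placeLegs23 k T U 1 1 (E k T l l) (E k T l l) (J l) := by
  simp only [emb, map_sum]
  refine Finset.sum_congr rfl fun l _ => ?_
  simp [embAt, WHA.leg23, Algebra.TensorProduct.one_def, placeLegs23]

lemma commute_ext23_thetaSum_leg23_emb (i j : T → T → T) (J : T → U ⊗[k] U)
    (hJ : ∀ l m : T, Commute (J l) (Coalgebra.comul (R := k) (P m))) :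
    Commute (WHA.ext23 k _ (ΔH k T U) (thetaSum k T P i j)) (WHA.leg23 k _ (emb k T U J)) := by
  rw [Commute, SemiconjBy, ext23_thetaSum, leg23_emb]
  simp only [Finset.sum_mul, Finset.mul_sum, placeLegs23_mul_placeLegs23, E_mul_E, one_mul, mul_one,
    placeLegs23_ite]
  simp [(hJ _ _).eq]

variable [AddCommGroup T]

theorem ext12_Θ_mul_leg12_emb (hP : ∀ m n : T, P m * P n = if m = n then P m else 0)
    (J : T → U ⊗[k] U) :
    WHA.ext12 k _ (ΔH k T U) (Θ k T U P) * WHA.leg12 k _ (emb k T U J)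
      = (∑ l : T, ∑ m : T, embShiftAt k T U P l m (J (l + m)))
          * WHA.ext12 k _ (ΔH k T U) (Θ k T U P) := by
  rw [Θ, ← thetaSum, ext12_thetaSum]
  trans ∑ l : T, ∑ m : T,
    placeLegs12 k T U (E k T l (l + m)) (E k T l (l + m)) (E k T l l) (P m) (J (l + m))
  · rw [leg12_emb]
    simp only [Finset.sum_mul]
    simp only [Finset.mul_sum, placeLegs12_mul_placeLegs12, E_mul_E, mul_one, placeLegs12_ite]
    simp
  · simp only [embShiftAt_eq_placeLegs12, Finset.sum_mul]
    simp only [Finset.mul_sum, placeLegs12_mul_placeLegs12, E_mul_E, one_mul, mul_one, hP,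
      placeLegs12_ite, placeLegs12_ite_right]
    simp

theorem leg12_emb_mul_ext12_Θbar (hP : ∀ m n : T, P m * P n = if m = n then P m else 0)
    (J : T → U ⊗[k] U) :
    WHA.leg12 k _ (emb k T U J) * WHA.ext12 k _ (ΔH k T U) (Θbar k T U P)
      = WHA.ext12 k _ (ΔH k T U) (Θbar k T U P)
          * ∑ l : T, ∑ m : T, embShiftAt k T U P l m (J (l + m)) := by
  rw [Θbar, ← thetaSum, ext12_thetaSum]
  trans ∑ l : T, ∑ m : T,
    placeLegs12 k T U (E k T (l + m) l) (E k T (l + m) l) (E k T l l) (P m) (J (l + m))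
  · rw [leg12_emb]
    simp only [Finset.mul_sum]
    simp only [Finset.sum_mul, placeLegs12_mul_placeLegs12, E_mul_E, one_mul, placeLegs12_ite]
    simp
  · simp only [embShiftAt_eq_placeLegs12, Finset.sum_mul]
    simp only [Finset.mul_sum, placeLegs12_mul_placeLegs12, E_mul_E, mul_one, hP,
      placeLegs12_ite, placeLegs12_ite_right]
    simp

end DQG

set_option maxHeartbeats 1000000 in
set_option synthInstance.maxHeartbeats 200000 in
/-- commutation identities between `Θ, Θ̄` and the embedding of an
invertible zero-weight function `J : T → U ⊗ U` into `H ⊗ H`. -/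
theorem theta_J_identities
    (k : Type*) [Field k]
    (T : Type*) [AddCommGroup T] [Fintype T] [DecidableEq T]
    (U : Type*) [Ring U] [HopfAlgebra k U]
    (P : T → U) (hP : DQG.IsPSystem k T U P)
    (J Jbar : T → U ⊗[k] U)
    (hinv₁ : ∀ l : T, J l * Jbar l = 1) (hinv₂ : ∀ l : T, Jbar l * J l = 1)
    (hw : ∀ l m : T,
      J l * Coalgebra.comul (R := k) (P m) = Coalgebra.comul (R := k) (P m) * J l)
    (Th Thb Jh Jbh : (Matrix T T k ⊗[k] U) ⊗[k] (Matrix T T k ⊗[k] U))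
    (hTh : Th = DQG.Θ k T U P) (hThb : Thb = DQG.Θbar k T U P)
    (hJh : Jh = DQG.emb k T U J) (hJbh : Jbh = DQG.emb k T U Jbar)
    (JS JbS : (Matrix T T k ⊗[k] U) ⊗[k] ((Matrix T T k ⊗[k] U) ⊗[k] (Matrix T T k ⊗[k] U)))
    (hJS : JS = ∑ l : T, ∑ m : T, DQG.embShiftAt k T U P l m (J (l + m)))
    (hJbS : JbS = ∑ l : T, ∑ m : T, DQG.embShiftAt k T U P l m (Jbar (l + m))) :
    WHA.ext12 k (Matrix T T k ⊗[k] U) (DQG.ΔH k T U) Th * WHA.leg12 k (Matrix T T k ⊗[k] U) Jh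
      = JS * WHA.ext12 k (Matrix T T k ⊗[k] U) (DQG.ΔH k T U) Th ∧
    WHA.ext23 k (Matrix T T k ⊗[k] U) (DQG.ΔH k T U) Th * WHA.leg23 k (Matrix T T k ⊗[k] U) Jh
      = WHA.leg23 k (Matrix T T k ⊗[k] U) Jh * WHA.ext23 k (Matrix T T k ⊗[k] U) (DQG.ΔH k T U) Th ∧
    WHA.leg12 k (Matrix T T k ⊗[k] U) Jbh * WHA.ext12 k (Matrix T T k ⊗[k] U) (DQG.ΔH k T U) Thb
      = WHA.ext12 k (Matrix T T k ⊗[k] U) (DQG.ΔH k T U) Thb * JbS ∧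
    WHA.leg23 k (Matrix T T k ⊗[k] U) Jbh * WHA.ext23 k (Matrix T T k ⊗[k] U) (DQG.ΔH k T U) Thb
      = WHA.ext23 k (Matrix T T k ⊗[k] U) (DQG.ΔH k T U) Thb * WHA.leg23 k (Matrix T T k ⊗[k] U) Jbh := by
  subst hTh hThb hJh hJbh hJS hJbS
  have hJbar : ∀ l m : T, Commute (Jbar l) (Coalgebra.comul (R := k) (P m)) := fun l m =>
    Commute.units_inv_left (u := ⟨J l, Jbar l, hinv₁ l, hinv₂ l⟩) (hw l m)
  exact ⟨DQG.ext12_Θ_mul_leg12_emb P hP.orth J,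
    (DQG.commute_ext23_thetaSum_leg23_emb P (fun l _ => l) (fun l m => l + m) J hw).eq,
    DQG.leg12_emb_mul_ext12_Θbar P hP.orth Jbar,
    (DQG.commute_ext23_thetaSum_leg23_emb P (fun l m => l + m) (fun l _ => l) Jbar hJbar).symm.eq⟩
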